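/- arXiv:2202.12012 — 2 statements merged into one kernel-verified Lean document; each statement's English description precedes it below -/
import Mathlib

section
/- Let G : C → D be a right adjoint functor between finitely complete categories with left adjoint F, and let κ be a regular cardinal such that both F and G preserve κ-compact objects and κ-compact objects of D are closed under finite limits. Then G preserves relatively κ-compact morphisms: if f : X → Y is relatively κ-compact in C, then G(f) is relatively κ-compact in D. -/
open CategoryTheory CategoryTheory.Limits

universe v u u'

/-- A category `J` is `κ`-filtered if every diagram in `J` indexed by a category
with fewer than `κ` morphisms admits a cocone. -/
def IsCardFiltered (κ : Cardinal.{v}) (J : Type v) [SmallCategory J] : Prop :=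
  ∀ (K : Type v) [SmallCategory K], Cardinal.mk (Σ a b : K, a ⟶ b) < κ →
    ∀ F : K ⥤ J, Nonempty (Cocone F)

/-- An object `X` is `κ`-compact if `Hom(X, −)` preserves `κ`-filtered colimits. -/
def IsKappaCompact (κ : Cardinal.{v}) {E : Type u} [Category.{v} E] (X : E) : Prop :=
  ∀ (J : Type v) [SmallCategory J], IsCardFiltered κ J →
    ∀ (F : J ⥤ E) (c : Cocone F), Nonempty (IsColimit c) →
      Nonempty (IsColimit ((coyoneda.obj (Opposite.op X)).mapCocone c))

/-- A morphism is relatively `κ`-compact if its pullback along any map from a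
`κ`-compact object is `κ`-compact. -/
def RelKappaCompact (κ : Cardinal.{v}) {E : Type u} [Category.{v} E] {X Y : E}
    (f : X ⟶ Y) : Prop :=
  ∀ (Z : E) (g : Z ⟶ Y), IsKappaCompact κ Z →
    ∀ (P : E) (fst : P ⟶ X) (snd : P ⟶ Z), IsPullback fst snd f g →
      IsKappaCompact κ P

/-- A right adjoint `G : C ⥤ D` between finitely complete categories preserves
relatively `κ`-compact morphisms, provided both adjoints preserve `κ`-compact objects
and `κ`-compact objects of `D` are closed under finite limits. -/
theorem rightAdjoint_preserves_relKappaCompact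
    {C : Type u} [Category.{v} C] {D : Type u'} [Category.{v} D]
    [HasFiniteLimits C] [HasFiniteLimits D]
    (κ : Cardinal.{v}) (hκ : κ.IsRegular)
    (F : D ⥤ C) (G : C ⥤ D) (adj : F ⊣ G)
    (hF : ∀ X : D, IsKappaCompact κ X → IsKappaCompact κ (F.obj X))
    (hG : ∀ X : C, IsKappaCompact κ X → IsKappaCompact κ (G.obj X))
    (hlim : ∀ (K : Type v) [SmallCategory K] [FinCategory K] (H : K ⥤ D),
      (∀ k : K, IsKappaCompact κ (H.obj k)) →
      ∀ (c : Cone H), Nonempty (IsLimit c) → IsKappaCompact κ c.pt)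
    {X Y : C} (f : X ⟶ Y) (hf : RelKappaCompact κ f) :
    RelKappaCompact κ (G.map f) := by
  intro Z g hZ P fst snd hP
  -- transpose g along the adjunction
  set gbar : F.obj Z ⟶ Y := (adj.homEquiv Z Y).symm g with hgbar
  have hg : g = adj.unit.app Z ≫ G.map gbar := by
    rw [hgbar]
    exact (Equiv.apply_symm_apply (adj.homEquiv Z Y) g).symm
  -- the pullback of f along gbar in C
  have hQpb : IsPullback (pullback.fst f gbar) (pullback.snd f gbar) f gbar :=
    IsPullback.of_hasPullback f gbar
  have hQ : IsKappaCompact κ (pullback f gbar) :=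
    hf (F.obj Z) gbar (hF Z hZ) _ _ _ hQpb
  -- G preserves the pullback
  haveI := adj.rightAdjoint_preservesLimits
  have t : IsPullback (G.map (pullback.fst f gbar)) (G.map (pullback.snd f gbar))
      (G.map f) (G.map gbar) := hQpb.map G
  -- outer rectangle
  have s : IsPullback fst snd (G.map f) (adj.unit.app Z ≫ G.map gbar) := by
    rw [← hg]; exact hP
  -- left square is a pullback
  have hleft : IsPullback (t.lift fst (snd ≫ adj.unit.app Z)
      (by rw [s.w, Category.assoc])) snd (G.map (pullback.snd f gbar)) (adj.unit.app Z) :=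
    IsPullback.of_right' s t
  -- assemble the finite-limit argument via hlim
  let e := ULiftHomULiftCategory.equiv.{v, v} WalkingCospan
  let H : ULiftHom.{v} (ULift.{v} WalkingCospan) ⥤ D :=
    e.inverse ⋙ cospan (G.map (pullback.snd f gbar)) (adj.unit.app Z)
  have hobj : ∀ k, IsKappaCompact κ (H.obj k) := by
    intro k
    have hH : H.obj k =
        (cospan (G.map (pullback.snd f gbar)) (adj.unit.app Z)).obj k.objDown.down := rfl
    rw [hH]
    rcases k.objDown.down with _ | kk
    · exact hG _ (hF Z hZ)
    · rcases kk with _ | _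
      · exact hG _ hQ
      · exact hZ
  have hc := hlim _ H hobj ((hleft.cone).whisker e.inverse)
    ⟨(hleft.isLimit).whiskerEquivalence e.symm⟩
  exact hc
end

section
/- Let κ be a regular cardinal greater than the cardinality of the morphism set of a small category C. A morphism f : P → Q in Psh(C) is relatively κ-compact if and only if for every object c of C and every morphism y(c) → Q from the representable presheaf, the pullback y(c) ×_Q P is κ-compact. -/
open CategoryTheory CategoryTheory.Limits

universe v u u'

/-!
For `C` with fewer than `κ` arrows, a presheaf is `κ`-compact exactly when all its values are
`κ`-small. If its values are small, it is the colimit of representables over its category of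
elements, a `κ`-small colimit of `κ`-compact objects. Conversely, evaluation at `d` has the
right adjoint `X ↦ X ^ Hom(-, d)`, which preserves `κ`-filtered colimits because the hom-sets
are `κ`-small, so evaluation carries `κ`-compact presheaves to `κ`-small sets.

With this description, evaluating the pullback square at `d` embeds `P'(d)` into
`Σ z ∈ Z(d), f_d⁻¹(g z)`, and the fiber `f_d⁻¹(q)` embeds into the value at `d` of the
pullback of `f` along the map `y(d) ⟶ Q` classifying `q`.
-/

universe w

open Opposite

lemma hasCardinalLT_arrow_iff_mk_sigma_hom_lt (K : Type v) [SmallCategory K]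
    (κ : Cardinal.{v}) :
    HasCardinalLT (Arrow K) κ ↔ Cardinal.mk (Σ a b : K, a ⟶ b) < κ := by
  rw [hasCardinalLT_iff_of_equiv (Arrow.equivSigma K), hasCardinalLT_iff_cardinal_mk_lt]

lemma hasCardinalLT_hom_of_hasCardinalLT_arrow {D : Type u} [Category.{v} D]
    {κ : Cardinal.{u'}} (hD : HasCardinalLT (Arrow D) κ) (a b : D) :
    HasCardinalLT (a ⟶ b) κ :=
  hD.of_injective Arrow.mk fun _ _ h => (Arrow.mk_inj _ _).1 h

lemma hasCardinalLT_arrow_elements {D : Type u} [Category.{v} D] (F : D ⥤ Type u')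
    {κ : Cardinal.{w}} [Fact κ.IsRegular] (hD : HasCardinalLT (Arrow D) κ)
    (hF : ∀ d, HasCardinalLT (F.obj d) κ) :
    HasCardinalLT (Arrow F.Elements) κ := by
  refine (hasCardinalLT_sigma (fun f : Arrow D => F.obj f.left) κ hD fun _ => hF _).of_surjective
    (fun ⟨f, x⟩ => Arrow.mk
      (CategoryOfElements.homMk ⟨f.left, x⟩ ⟨f.right, F.map f.hom x⟩ f.hom rfl)) ?_
  rintro ⟨⟨c, x⟩, ⟨c', x'⟩, f⟩
  -- as stated, the type of `f` mentions `x'`, which would block substituting it away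
  revert f
  change ∀ f : {g : c ⟶ c' // F.map g x = x'}, _
  rintro ⟨f, rfl⟩
  exact ⟨⟨Arrow.mk f, x⟩, rfl⟩

section Regular

variable (κ : Cardinal.{v}) [Fact κ.IsRegular]

lemma isCardFiltered_iff_isCardinalFiltered (J : Type v) [SmallCategory J] :
    IsCardFiltered κ J ↔ IsCardinalFiltered J κ := by
  simp only [IsCardFiltered, ← hasCardinalLT_arrow_iff_mk_sigma_hom_lt]
  exact ⟨fun h => ⟨fun F hA => h _ hA F⟩, fun h _ _ hK F => h.nonempty_cocone F hK⟩

lemma isKappaCompact_iff_isCardinalPresentable {E : Type u} [Category.{v} E] (X : E) :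
    IsKappaCompact κ X ↔ IsCardinalPresentable X κ := by
  constructor
  · intro h
    refine ⟨fun J _ hJ => ⟨fun {F} => ⟨fun {c} hc => ?_⟩⟩⟩
    exact h J ((isCardFiltered_iff_isCardinalFiltered κ J).2 hJ) F c ⟨hc⟩
  · intro _ J _ hJ F c ⟨hc⟩
    have := (isCardFiltered_iff_isCardinalFiltered κ J).1 hJ
    have := preservesColimitsOfShape_of_isCardinalPresentable X κ J
    exact ⟨isColimitOfPreserves _ hc⟩

end Regular

section EvaluationRightAdjoint

variable {D : Type u} [Category.{v} D]

noncomputable def evaluationRightAdjointCompEvaluationIso (c t : D) :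
    evaluationRightAdjoint (Type v) c ⋙ (evaluation D (Type v)).obj t ≅
      coyoneda.obj (op (t ⟶ c)) :=
  NatIso.ofComponents
    (fun X => (limit.isLimit _).conePointUniqueUpToIso
      (Types.productLimitCone.{v, v} (fun _ : t ⟶ c => X)).isLimit ≪≫
        TypeCat.homEquiv.symm.toIso) (by
    intro X Y φ
    ext x
    apply TypeCat.homEquiv.injective
    funext f
    exact Types.pi_lift_π_apply _ _ f x)

lemma evaluationRightAdjoint_isCardinalAccessible {κ : Cardinal.{v}} [Fact κ.IsRegular]
    (c : D) (hc : ∀ t, HasCardinalLT (t ⟶ c) κ) :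
    (evaluationRightAdjoint (Type v) c).IsCardinalAccessible κ where
  preservesColimitOfShape J _ _ := by
    refine preservesColimitsOfShape_of_evaluation _ J fun t => ?_
    have := (hc t).isCardinalPresentable
    have := preservesColimitsOfShape_of_isCardinalPresentable (t ⟶ c) κ J
    exact preservesColimitsOfShape_of_natIso (evaluationRightAdjointCompEvaluationIso c t).symm

end EvaluationRightAdjoint

section Presheaf

variable {C : Type v} [SmallCategory C] {κ : Cardinal.{v}} [Fact κ.IsRegular]

lemma hasCardinalLT_obj_of_isCardinalPresentable (hC : HasCardinalLT (Arrow C) κ)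
    (P : Cᵒᵖ ⥤ Type v) [IsCardinalPresentable P κ] (d : Cᵒᵖ) :
    HasCardinalLT (P.obj d) κ := by
  have hCop := (hasCardinalLT_arrow_op_iff C κ).2 hC
  have := evaluationRightAdjoint_isCardinalAccessible d
    (hasCardinalLT_hom_of_hasCardinalLT_arrow hCop · d)
  have := (evaluationAdjunctionLeft (Type v) d).isCardinalPresentable_leftAdjoint_obj κ P
  exact (Types.isCardinalPresentable_iff κ).1 this

lemma isCardinalPresentable_of_hasCardinalLT_obj (hC : HasCardinalLT (Arrow C) κ)
    (P : Cᵒᵖ ⥤ Type v) (hP : ∀ d, HasCardinalLT (P.obj d) κ) :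
    IsCardinalPresentable P κ :=
  have (k : P.Elementsᵒᵖ) :
      IsCardinalPresentable ((Presheaf.functorToRepresentables P).obj k) κ := by
    simp only [Presheaf.functorToRepresentables_obj]
    infer_instance
  isCardinalPresentable_of_isColimit _ (Presheaf.colimitOfRepresentable.{v} P) κ
    ((hasCardinalLT_arrow_op_iff _ κ).2
      (hasCardinalLT_arrow_elements P ((hasCardinalLT_arrow_op_iff C κ).2 hC) hP))

lemma isKappaCompact_iff_forall_hasCardinalLT_obj (hC : HasCardinalLT (Arrow C) κ)
    (P : Cᵒᵖ ⥤ Type v) :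
    IsKappaCompact κ P ↔ ∀ d, HasCardinalLT (P.obj d) κ := by
  rw [isKappaCompact_iff_isCardinalPresentable]
  exact ⟨fun _ => hasCardinalLT_obj_of_isCardinalPresentable hC P,
    isCardinalPresentable_of_hasCardinalLT_obj hC P⟩

end Presheaf

section Pullback

variable {W X Y Z : Type u} {fst : W ⟶ X} {snd : W ⟶ Z} {f : X ⟶ Y} {g : Z ⟶ Y}
  {κ : Cardinal.{u'}}

lemma Types.hasCardinalLT_of_isPullback [Fact κ.IsRegular] (h : IsPullback fst snd f g)
    (hZ : HasCardinalLT Z κ) (hf : ∀ z, HasCardinalLT {x // f x = g z} κ) :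
    HasCardinalLT W κ :=
  (hasCardinalLT_sigma _ κ hZ hf).of_injective (fun w => ⟨snd w, fst w, types_congr_hom h.w w⟩)
    fun _ _ hw => Types.ext_of_isPullback h (congr_arg (fun s => (s.2 : X)) hw)
      (congr_arg Sigma.fst hw)

lemma Types.hasCardinalLT_fiber_of_isPullback (h : IsPullback fst snd f g)
    (hW : HasCardinalLT W κ) (z : Z) :
    HasCardinalLT {x // f x = g z} κ := by
  choose w hw using fun x : {x // f x = g z} => Types.exists_of_isPullback h x.1 z x.2
  exact hW.of_injective w fun x y hxy => Subtype.ext <| by rw [← (hw x).1, ← (hw y).1, hxy]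

end Pullback

lemma hasCardinalLT_fiber_of_hasCardinalLT_pullback {C : Type u} [Category.{v} C]
    {κ : Cardinal.{u'}} {P Q : Cᵒᵖ ⥤ Type v} (f : P ⟶ Q) {d : Cᵒᵖ} (q : Q.obj d)
    (h : HasCardinalLT ((pullback f (yonedaEquiv.symm q)).obj d) κ) :
    HasCardinalLT {p // f.app d p = q} κ := by
  have hq : (yonedaEquiv.symm q).app d (𝟙 d.unop) = q := yonedaEquiv.apply_symm_apply q
  exact hq ▸ Types.hasCardinalLT_fiber_of_isPullback
    ((IsPullback.of_hasPullback f (yonedaEquiv.symm q)).map ((evaluation _ _).obj d)) h (𝟙 d.unop)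

/-- For a regular cardinal `κ` larger than the number of morphisms of a small
category `C`, a morphism of presheaves `f : P ⟶ Q` is relatively `κ`-compact iff its
pullbacks along maps from representable presheaves are `κ`-compact. -/
theorem presheaf_relKappaCompact_iff_representable_fibers
    {C : Type v} [SmallCategory C] (κ : Cardinal.{v}) (hκ : κ.IsRegular)
    (hC : Cardinal.mk (Σ X Y : C, X ⟶ Y) < κ)
    {P Q : Cᵒᵖ ⥤ Type v} (f : P ⟶ Q) :
    RelKappaCompact κ f ↔
      ∀ (c : C) (g : yoneda.obj c ⟶ Q) (Pt : Cᵒᵖ ⥤ Type v)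
        (fst : Pt ⟶ P) (snd : Pt ⟶ yoneda.obj c),
        IsPullback fst snd f g → IsKappaCompact κ Pt := by
  have : Fact κ.IsRegular := ⟨hκ⟩
  have hC' : HasCardinalLT (Arrow C) κ := (hasCardinalLT_arrow_iff_mk_sigma_hom_lt C κ).2 hC
  simp only [RelKappaCompact, isKappaCompact_iff_forall_hasCardinalLT_obj hC']
  constructor
  · intro h c g Pt fst snd pb
    exact h _ g (fun d => hasCardinalLT_hom_of_hasCardinalLT_arrow hC' d.unop c) Pt fst snd pb
  · intro H Z g hZ P' fst snd pb d
    refine Types.hasCardinalLT_of_isPullback (pb.map ((evaluation _ _).obj d)) (hZ d)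
      fun z => hasCardinalLT_fiber_of_hasCardinalLT_pullback f _ ?_
    exact H _ _ _ _ _ (IsPullback.of_hasPullback _ _) d
end
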